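/- arXiv:2401.04063 — 7 statements merged into one kernel-verified Lean document; each statement's English description precedes it below -/
import Mathlib

section
/- Under the setting of the finite-dimensional generalized eigenvalue problem with a-orthonormal eigenvectors u_1,…,u_N and eigenvalues 0 < λ_1 ≤ … ≤ λ_N, let μ_j = 1/λ_j. For any w ∈ V with expansion w = Σ_{j>k} α_j u_j, where α_j = c_j/(μ − μ_j) for some μ > 0 and reals c_j satisfying c_j = b(g, u_j) for some g ∈ V, one has ‖w‖_a² ≤ (μ_{k+1}/δ²) ‖g‖_b², where δ = min_{j>k} |μ_j − μ| and ‖·‖_a, ‖·‖_b are the norms induced by a and b. -/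
theorem stmt_3 {V : Type*} [AddCommGroup V] [Module ℝ V] [FiniteDimensional ℝ V]
    (a b : V →ₗ[ℝ] V →ₗ[ℝ] ℝ)
    (hsa : ∀ x y, a x y = a y x) (hsb : ∀ x y, b x y = b y x)
    (hpa : ∀ x, x ≠ 0 → 0 < a x x) (hpb : ∀ x, x ≠ 0 → 0 < b x x)
    (N k : ℕ) (hk : k < N)
    (μ : Fin N → ℝ) (u : Fin N → V)
    (hμpos : ∀ j, 0 < μ j)
    (horth : ∀ i j, a (u i) (u j) = if i = j then 1 else 0)
    (hborth : ∀ i j, b (u i) (u j) = if i = j then μ j else 0)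
    (hmono : ∀ j : Fin N, k ≤ (j : ℕ) → μ j ≤ μ ⟨k, hk⟩)
    (g : V) (μ0 δ : ℝ) (hμ0 : 0 < μ0) (hδ : 0 < δ)
    (hgap : ∀ j : Fin N, k ≤ (j : ℕ) → δ ≤ |μ j - μ0|)
    (w : V)
    (hw : w = ∑ j ∈ Finset.univ.filter (fun j : Fin N => k ≤ (j : ℕ)),
        (b g (u j) / (μ0 - μ j)) • u j) :
    a w w ≤ (μ ⟨k, hk⟩ / δ ^ 2) * b g g := by
  classical
  set S := Finset.univ.filter (fun j : Fin N => k ≤ (j : ℕ)) with hS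
  set c : Fin N → ℝ := fun j => b g (u j) with hc
  set K : ℝ := μ ⟨k, hk⟩ with hK
  have hKpos : 0 < K := hμpos _
  -- generic expansion
  have expand : ∀ (B : V →ₗ[ℝ] V →ₗ[ℝ] ℝ) (d : Fin N → ℝ),
      (∀ i j, B (u i) (u j) = if i = j then d j else 0) →
      ∀ (f h : Fin N → ℝ),
      B (∑ j ∈ S, f j • u j) (∑ j ∈ S, h j • u j) = ∑ j ∈ S, f j * h j * d j := by
    intro B d hB f h
    calc B (∑ j ∈ S, f j • u j) (∑ j ∈ S, h j • u j)
        = ∑ j ∈ S, ∑ i ∈ S, f i * h j * B (u i) (u j) := by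
          rw [map_sum]
          refine Finset.sum_congr rfl fun j hj => ?_
          rw [map_smul, smul_eq_mul, map_sum, LinearMap.sum_apply, Finset.mul_sum]
          refine Finset.sum_congr rfl fun i hi => ?_
          rw [map_smul, LinearMap.smul_apply, smul_eq_mul]
          ring
      _ = ∑ j ∈ S, f j * h j * d j := by
          refine Finset.sum_congr rfl fun j hj => ?_
          rw [Finset.sum_eq_single j]
          · rw [hB, if_pos rfl]
          · intro i hi hne
            rw [hB, if_neg hne]
            ring
          · intro hh; exact absurd hj hh
  have hmemS : ∀ j ∈ S, k ≤ (j : ℕ) := fun j hj => (Finset.mem_filter.mp hj).2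
  -- Bessel
  set p := ∑ j ∈ S, (c j / μ j) • u j with hp
  have hbpp : b p p = ∑ j ∈ S, c j ^ 2 / μ j := by
    rw [hp, expand b μ hborth]
    refine Finset.sum_congr rfl fun j hj => ?_
    have := (hμpos j).ne'
    field_simp
  have hbgp : b g p = ∑ j ∈ S, c j ^ 2 / μ j := by
    rw [hp, map_sum]
    refine Finset.sum_congr rfl fun j hj => ?_
    rw [map_smul, smul_eq_mul]
    have hμ := (hμpos j).ne'
    have hcj : (b g) (u j) = c j := rfl
    rw [hcj]
    field_simp
  have hnn : 0 ≤ b (g - p) (g - p) := by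
    by_cases hgp0 : g - p = 0
    · simp [hgp0]
    · exact (hpb _ hgp0).le
  have hexpand : b (g - p) (g - p) = b g g - 2 * b g p + b p p := by
    have hsymm : b p g = b g p := hsb p g
    simp only [map_sub, LinearMap.sub_apply]
    rw [hsymm]; ring
  have bessel : ∑ j ∈ S, c j ^ 2 / μ j ≤ b g g := by
    rw [hexpand, hbgp, hbpp] at hnn
    linarith
  -- expand a w w
  have haww : a w w = ∑ j ∈ S, (c j / (μ0 - μ j)) * (c j / (μ0 - μ j)) * 1 := by
    rw [hw]
    exact expand a (fun _ => 1) (by simpa using horth) _ _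
  rw [haww]
  have hterm : ∀ j ∈ S, (c j / (μ0 - μ j)) * (c j / (μ0 - μ j)) * 1
      ≤ (K / δ ^ 2) * (c j ^ 2 / μ j) := by
    intro j hj
    have hjk := hmemS j hj
    have hgapj := hgap j hjk
    have hsq : δ ^ 2 ≤ (μ0 - μ j) ^ 2 := by
      nlinarith [abs_nonneg (μ j - μ0), sq_abs (μ j - μ0)]
    have ht : (μ0 - μ j) ≠ 0 := by
      intro h0
      rw [show μ j - μ0 = -(μ0 - μ j) by ring, h0] at hgapj
      simp at hgapj; linarith
    have hμj := hμpos j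
    have hμK := hmono j hjk
    rw [mul_one, div_mul_div_comm, ← sq, ← sq]
    calc c j ^ 2 / (μ0 - μ j) ^ 2 ≤ c j ^ 2 / δ ^ 2 := by
          apply div_le_div_of_nonneg_left (sq_nonneg _) (pow_pos hδ 2) hsq
      _ ≤ (K / δ ^ 2) * (c j ^ 2 / μ j) := by
          rw [div_mul_div_comm, div_le_div_iff₀ (by positivity) (by positivity)]
          nlinarith [mul_nonneg (sq_nonneg (c j)) (sq_nonneg δ)]
  calc (∑ j ∈ S, (c j / (μ0 - μ j)) * (c j / (μ0 - μ j)) * 1)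
      ≤ ∑ j ∈ S, (K / δ ^ 2) * (c j ^ 2 / μ j) := Finset.sum_le_sum hterm
    _ = (K / δ ^ 2) * ∑ j ∈ S, c j ^ 2 / μ j := by rw [Finset.mul_sum]
    _ ≤ (K / δ ^ 2) * b g g := by
        apply mul_le_mul_of_nonneg_left bessel (by positivity)
end

section
/- With the same setting, for w = Σ_{j>k} α_j u_j with α_j = b(g,u_j)/(μ − μ_j), the b-norm satisfies ‖w‖_b ≤ (μ_{k+1}/δ) ‖g‖_b, where δ = min_{j>k} |μ_j − μ|. -/
theorem stmt_4 {V : Type*} [AddCommGroup V] [Module ℝ V] [FiniteDimensional ℝ V]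
    (a b : V →ₗ[ℝ] V →ₗ[ℝ] ℝ)
    (hsa : ∀ x y, a x y = a y x) (hsb : ∀ x y, b x y = b y x)
    (hpa : ∀ x, x ≠ 0 → 0 < a x x) (hpb : ∀ x, x ≠ 0 → 0 < b x x)
    (N k : ℕ) (hk : k < N)
    (μ : Fin N → ℝ) (u : Fin N → V)
    (hμpos : ∀ j, 0 < μ j)
    (horth : ∀ i j, a (u i) (u j) = if i = j then 1 else 0)
    (hborth : ∀ i j, b (u i) (u j) = if i = j then μ j else 0)
    (hmono : ∀ j : Fin N, k ≤ (j : ℕ) → μ j ≤ μ ⟨k, hk⟩)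
    (g : V) (μ0 δ : ℝ) (hμ0 : 0 < μ0) (hδ : 0 < δ)
    (hgap : ∀ j : Fin N, k ≤ (j : ℕ) → δ ≤ |μ j - μ0|)
    (w : V)
    (hw : w = ∑ j ∈ Finset.univ.filter (fun j : Fin N => k ≤ (j : ℕ)),
        (b g (u j) / (μ0 - μ j)) • u j) :
    Real.sqrt (b w w) ≤ (μ ⟨k, hk⟩ / δ) * Real.sqrt (b g g) := by
  set S := Finset.univ.filter (fun j : Fin N => k ≤ (j : ℕ)) with hS
  set μK := μ ⟨k, hk⟩ with hμK
  have hμKpos : 0 < μK := hμpos _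
  -- general expansion lemma
  have expand : ∀ c : Fin N → ℝ, b (∑ j ∈ S, c j • u j) (∑ j ∈ S, c j • u j)
      = ∑ j ∈ S, (c j)^2 * μ j := by
    intro c
    simp only [map_sum, map_smul, LinearMap.sum_apply, LinearMap.smul_apply, smul_eq_mul]
    apply Finset.sum_congr rfl
    intro j hj
    rw [Finset.sum_eq_single j]
    · rw [hborth]; simp; ring
    · intro i hi hij
      rw [hborth]; simp [hij]
    · intro h; exact absurd hj h
  have hbgg : 0 ≤ b g g := by
    rcases eq_or_ne g 0 with h | h
    · simp [h]
    · exact (hpb g h).le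
  -- Bessel
  have hbessel : ∑ j ∈ S, (b g (u j))^2 / μ j ≤ b g g := by
    set c : Fin N → ℝ := fun j => b g (u j) / μ j with hc
    set p := ∑ j ∈ S, c j • u j with hp
    have h1 : 0 ≤ b (g - p) (g - p) := by
      rcases eq_or_ne (g - p) 0 with h | h
      · simp [h]
      · exact (hpb _ h).le
    have h2 : b g p = ∑ j ∈ S, (b g (u j))^2 / μ j := by
      rw [hp, map_sum]
      apply Finset.sum_congr rfl
      intro j hj
      have : μ j ≠ 0 := (hμpos j).ne'
      rw [map_smul, smul_eq_mul, hc]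
      field_simp
    have h3 : b p p = ∑ j ∈ S, (b g (u j))^2 / μ j := by
      rw [hp, expand c]
      apply Finset.sum_congr rfl
      intro j hj
      have : μ j ≠ 0 := (hμpos j).ne'
      rw [hc]
      field_simp
    have h4 : b p g = b g p := hsb p g
    have : b (g - p) (g - p) = b g g - b g p - b p g + b p p := by
      simp [map_sub, LinearMap.sub_apply]; ring
    rw [this, h4, h2, h3] at h1
    linarith
  -- expansion of w
  have hww : b w w = ∑ j ∈ S, (b g (u j) / (μ0 - μ j))^2 * μ j := by
    rw [hw]; exact expand _
  -- termwise bound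
  have hbound : b w w ≤ (μK / δ)^2 * b g g := by
    rw [hww]
    have : ∑ j ∈ S, (b g (u j) / (μ0 - μ j))^2 * μ j
        ≤ ∑ j ∈ S, (μK / δ)^2 * ((b g (u j))^2 / μ j) := by
      apply Finset.sum_le_sum
      intro j hj
      have hjk : k ≤ (j : ℕ) := (Finset.mem_filter.mp hj).2
      have hgapj : δ ≤ |μ j - μ0| := hgap j hjk
      have hmj : 0 < μ j := hμpos j
      have hmle : μ j ≤ μK := hmono j hjk
      have hδ2 : δ^2 ≤ (μ0 - μ j)^2 := by
        have : δ^2 ≤ |μ j - μ0|^2 := by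
          apply pow_le_pow_left₀ hδ.le hgapj
        rw [sq_abs] at this
        nlinarith
      have hne : (μ0 - μ j) ≠ 0 := by
        intro h
        rw [h] at hδ2
        nlinarith
      have h1 : (b g (u j) / (μ0 - μ j))^2 * μ j
          = ((b g (u j))^2 / μ j) * (μ j / (μ0 - μ j))^2 := by
        field_simp
      have h2 : (μ j / (μ0 - μ j))^2 ≤ (μK/δ)^2 := by
        rw [div_pow, div_pow]
        exact div_le_div₀ (by positivity) (by nlinarith) (by positivity) hδ2
      rw [h1]
      calc ((b g (u j))^2 / μ j) * (μ j / (μ0 - μ j))^2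
          ≤ ((b g (u j))^2 / μ j) * (μK/δ)^2 :=
            mul_le_mul_of_nonneg_left h2 (by positivity)
        _ = (μK / δ)^2 * ((b g (u j))^2 / μ j) := by ring
    calc _ ≤ _ := this
      _ = (μK/δ)^2 * ∑ j ∈ S, (b g (u j))^2 / μ j := by rw [Finset.mul_sum]
      _ ≤ (μK/δ)^2 * b g g := by
          apply mul_le_mul_of_nonneg_left hbessel (by positivity)
  calc Real.sqrt (b w w) ≤ Real.sqrt ((μK/δ)^2 * b g g) := Real.sqrt_le_sqrt hbound
    _ = (μK/δ) * Real.sqrt (b g g) := by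
        rw [Real.sqrt_mul (by positivity), Real.sqrt_sq (by positivity)]
end

section
/- Let V be a finite-dimensional real vector space equipped with symmetric positive-definite bilinear forms a and b with induced norms ‖·‖_a and ‖·‖_b. Suppose P: V → W is the a-orthogonal projection onto a subspace W and there is a constant η > 0 such that ‖w − P w‖_b ≤ η ‖w − P w‖_a for all w ∈ V. Let (λ̄_i, ū_i) be the generalized a–b eigenpairs of V (a-orthonormal, eigenvalues 0 < λ̄_1 ≤ … ≤ λ̄_N) and let (λ̃_j, ũ_j) be the generalized a–b eigenpairs of the subspace W. If ū ∈ V is an eigenvector with eigenvalue λ̄, F the a-orthogonal projection onto span{ũ_1,…,ũ_k} ⊆ W, and δ = min_{k<j≤dim W} |1/λ̃_j − 1/λ̄| > 0, then ‖ū − F ū‖_a ≤ √(1 + (η²/λ̃_{k+1}) / δ²) · ‖ū − P ū‖_a. -/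
set_option maxHeartbeats 2000000 in
theorem stmt_8 {V : Type*} [AddCommGroup V] [Module ℝ V] [FiniteDimensional ℝ V]
    (a b : V →ₗ[ℝ] V →ₗ[ℝ] ℝ)
    (hsa : ∀ x y, a x y = a y x) (hsb : ∀ x y, b x y = b y x)
    (hpa : ∀ x, x ≠ 0 → 0 < a x x) (hpb : ∀ x, x ≠ 0 → 0 < b x x)
    (W : Submodule ℝ V)
    (P : V →ₗ[ℝ] V) (hPmem : ∀ w, P w ∈ W)
    (hPorth : ∀ w, ∀ y ∈ W, a (w - P w) y = 0)
    (η : ℝ) (hη : 0 < η)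
    (happrox : ∀ w : V, Real.sqrt (b (w - P w) (w - P w))
        ≤ η * Real.sqrt (a (w - P w) (w - P w)))
    (M : ℕ) (lamt : Fin M → ℝ) (ut : Fin M → V)
    (hutW : ∀ j, ut j ∈ W)
    (hlamt_pos : ∀ j, 0 < lamt j)
    (hlamt_mono : Monotone lamt)
    (horth : ∀ i j, a (ut i) (ut j) = if i = j then 1 else 0)
    (heigW : ∀ j, ∀ v ∈ W, a (ut j) v = lamt j * b (ut j) v)
    (hspan : Submodule.span ℝ (Set.range ut) = W)
    (k : ℕ) (hk : k < M)
    (F : V →ₗ[ℝ] V)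
    (hFmem : ∀ w, F w ∈ Submodule.span ℝ (ut '' {j | (j : ℕ) < k}))
    (hForth : ∀ w, ∀ y ∈ Submodule.span ℝ (ut '' {j | (j : ℕ) < k}), a (w - F w) y = 0)
    (ubar : V) (lambar : ℝ) (hlambar : 0 < lambar)
    (heig : ∀ v, a ubar v = lambar * b ubar v)
    (δ : ℝ) (hδ : 0 < δ)
    (hgap : ∀ j : Fin M, k ≤ (j : ℕ) → δ ≤ |1 / lamt j - 1 / lambar|) :
    Real.sqrt (a (ubar - F ubar) (ubar - F ubar))
      ≤ Real.sqrt (1 + (η ^ 2 / lamt ⟨k, hk⟩) / δ ^ 2)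
        * Real.sqrt (a (ubar - P ubar) (ubar - P ubar)) := by
  classical
  have hla : ∀ j, lamt j ≠ 0 := fun j => (hlamt_pos j).ne'
  have hna : ∀ x : V, 0 ≤ a x x := by
    intro x
    by_cases hx : x = 0
    · simp [hx]
    · exact (hpa x hx).le
  have hnb : ∀ x : V, 0 ≤ b x x := by
    intro x
    by_cases hx : x = 0
    · simp [hx]
    · exact (hpb x hx).le
  set e := ubar - P ubar with he
  set q := P ubar - F ubar with hqdef
  have hspanW : Submodule.span ℝ (ut '' {j : Fin M | (j : ℕ) < k}) ≤ W := by
    rw [← hspan]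
    refine Submodule.span_mono ?_
    rintro _ ⟨j, -, rfl⟩
    exact Set.mem_range_self j
  have hqW : q ∈ W := W.sub_mem (hPmem ubar) (hspanW (hFmem ubar))
  have heorth : ∀ y ∈ W, a e y = 0 := fun y hy => hPorth ubar y hy
  set c : Fin M → ℝ := fun j => a ubar (ut j) with hc
  have hPcoef : ∀ j, a (P ubar) (ut j) = c j := by
    intro j
    have h0 := heorth (ut j) (hutW j)
    simp only [he, map_sub, LinearMap.sub_apply] at h0
    simp only [hc]
    linarith
  have hbutut : ∀ i j, b (ut i) (ut j) = (if i = j then 1 else 0) / lamt i := by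
    intro i j
    have h1 := heigW i (ut j) (hutW j)
    rw [horth] at h1
    rw [eq_div_iff (hla i)]
    linarith
  -- coefficients of q
  have hq_coef : ∀ j, a q (ut j) = if k ≤ (j : ℕ) then c j else 0 := by
    intro j
    by_cases hj : k ≤ (j : ℕ)
    · have hF0 : a (F ubar) (ut j) = 0 := by
        have key : ∀ y ∈ Submodule.span ℝ (ut '' {i : Fin M | (i : ℕ) < k}),
            a y (ut j) = 0 := by
          intro y hy
          induction hy using Submodule.span_induction with
          | mem x hx =>
              obtain ⟨i, hi, rfl⟩ := hx
              have hne : i ≠ j := by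
                intro h; subst h; simp only [Set.mem_setOf_eq] at hi; omega
              rw [horth, if_neg hne]
          | zero => simp
          | add x y _ _ hx hy => simp [map_add, hx, hy]
          | smul t x _ hx => simp [map_smul, hx]
        exact key _ (hFmem ubar)
      rw [if_pos hj]
      simp only [hqdef, map_sub, LinearMap.sub_apply, hF0]
      rw [hPcoef]; ring
    · have h2 := hForth ubar (ut j) (Submodule.subset_span ⟨j, by simpa using Nat.lt_of_not_le hj, rfl⟩)
      simp only [map_sub, LinearMap.sub_apply] at h2
      rw [if_neg hj]
      simp only [hqdef, map_sub, LinearMap.sub_apply]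
      rw [hPcoef]
      simp only [hc]
      linarith
  -- expansion of q in the basis
  have hexp : q = ∑ j, a q (ut j) • ut j := by
    set r := q - ∑ j, a q (ut j) • ut j with hr
    have hri : ∀ i, a r (ut i) = 0 := by
      intro i
      rw [hr]
      simp only [map_sub, LinearMap.sub_apply, map_sum, LinearMap.sum_apply,
        map_smul, LinearMap.smul_apply, smul_eq_mul]
      rw [Finset.sum_eq_single i]
      · rw [horth, if_pos rfl]; ring
      · intro j _ hji; rw [horth, if_neg hji]; ring
      · intro h; exact absurd (Finset.mem_univ i) h
    have hrW : r ∈ W := W.sub_mem hqW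
      (Submodule.sum_mem _ fun j _ => W.smul_mem _ (hutW j))
    have hrr : a r r = 0 := by
      have hy : ∀ y ∈ W, a r y = 0 := by
        intro y hy
        rw [← hspan] at hy
        induction hy using Submodule.span_induction with
        | mem x hx => obtain ⟨i, rfl⟩ := hx; exact hri i
        | zero => simp
        | add x y _ _ hx hy => simp [map_add, hx, hy]
        | smul t x _ hx => simp [map_smul, hx]
      exact hy r hrW
    have hr0 : r = 0 := by
      by_contra h
      exact absurd hrr (hpa r h).ne'
    rw [hr] at hr0
    exact sub_eq_zero.mp hr0
  -- a q q as a sum of squares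
  have haqq : a q q = ∑ j : Fin M, (if k ≤ (j : ℕ) then (c j) ^ 2 else 0) := by
    nth_rewrite 2 [hexp]
    rw [map_sum]
    simp only [map_smul, smul_eq_mul]
    refine Finset.sum_congr rfl fun j _ => ?_
    rw [hq_coef]
    by_cases hj : k ≤ (j : ℕ) <;> simp [hj] <;> ring
  -- eigen-coefficient relation
  have hbe : ∀ j : Fin M, b (ut j) e = c j * (1 / lambar - 1 / lamt j) := by
    intro j
    have h1 : c j = lambar * b ubar (ut j) := heig (ut j)
    have h2 : a (ut j) (P ubar) = lamt j * b (ut j) (P ubar) :=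
      heigW j (P ubar) (hPmem ubar)
    rw [hsa] at h2
    rw [hPcoef] at h2
    have h3 : b (ut j) ubar = c j / lambar := by
      rw [hsb, eq_div_iff hlambar.ne']; linarith
    have h4 : b (ut j) (P ubar) = c j / lamt j := by
      rw [eq_div_iff (hla j)]; linarith
    simp only [he, map_sub]
    rw [h3, h4]
    ring
  -- Bessel inequality for b
  set S : ℝ := ∑ j, lamt j * (b (ut j) e) ^ 2 with hS
  have hbessel : S ≤ b e e := by
    set d : Fin M → ℝ := fun j => lamt j * b (ut j) e with hd
    set s : V := ∑ j, d j • ut j with hs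
    have hbes : b e s = S := by
      rw [hs, map_sum]
      simp only [map_smul, smul_eq_mul]
      refine Finset.sum_congr rfl fun j _ => ?_
      rw [hsb e (ut j)]
      simp only [hd]; ring
    have hbse : b s e = S := by rw [hsb]; exact hbes
    have hbis : ∀ i, b (ut i) s = d i / lamt i := by
      intro i
      rw [hs, map_sum]
      simp only [map_smul, smul_eq_mul]
      rw [Finset.sum_eq_single i]
      · rw [hbutut, if_pos rfl]; ring
      · intro j _ hji; rw [hbutut, if_neg hji.symm]; simp
      · intro h; exact absurd (Finset.mem_univ i) h
    have hbss : b s s = S := by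
      have h1 : ∀ y, b s y = ∑ i, d i * b (ut i) y := by
        intro y
        rw [hs]
        rw [map_sum]
        simp only [LinearMap.coe_sum, Finset.sum_apply, LinearMap.sum_apply,
          map_smul, LinearMap.smul_apply, smul_eq_mul]
      rw [h1 s, hS]
      refine Finset.sum_congr rfl fun j _ => ?_
      rw [hbis j]
      simp only [hd]
      field_simp [hla j]
    have h0 : 0 ≤ b (e - s) (e - s) := hnb _
    simp only [map_sub, LinearMap.sub_apply] at h0
    rw [hbes, hbse, hbss] at h0
    linarith
  -- per-term bound
  have hterm : ∀ j : Fin M,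
      (if k ≤ (j : ℕ) then (c j) ^ 2 else 0) * (lamt ⟨k, hk⟩ * δ ^ 2)
        ≤ lamt j * (b (ut j) e) ^ 2 := by
    intro j
    by_cases hj : k ≤ (j : ℕ)
    · rw [if_pos hj]
      have hgapj := hgap j hj
      have h1 : δ ^ 2 ≤ (1 / lamt j - 1 / lambar) ^ 2 := by
        have := sq_abs (1 / lamt j - 1 / lambar)
        nlinarith [abs_nonneg (1 / lamt j - 1 / lambar)]
      have h2 : (c j) ^ 2 * δ ^ 2 ≤ (b (ut j) e) ^ 2 := by
        rw [hbe]
        have : (c j * (1 / lambar - 1 / lamt j)) ^ 2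
            = (c j) ^ 2 * (1 / lamt j - 1 / lambar) ^ 2 := by ring
        rw [this]
        nlinarith [sq_nonneg (c j)]
      have hmono : lamt ⟨k, hk⟩ ≤ lamt j := hlamt_mono (by exact hj)
      nlinarith [sq_nonneg (b (ut j) e), (hlamt_pos ⟨k, hk⟩).le, sq_nonneg (c j)]
    · rw [if_neg hj]
      have := (hlamt_pos j).le
      nlinarith [sq_nonneg (b (ut j) e)]
  have hsum : a q q * (lamt ⟨k, hk⟩ * δ ^ 2) ≤ S := by
    rw [haqq, Finset.sum_mul, hS]
    exact Finset.sum_le_sum fun j _ => hterm j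
  -- b e e ≤ η² a e e
  have hbea : b e e ≤ η ^ 2 * a e e := by
    have h := happrox ubar
    have h1 : Real.sqrt (b e e) ≤ η * Real.sqrt (a e e) := h
    have h2 : Real.sqrt (b e e) ^ 2 ≤ (η * Real.sqrt (a e e)) ^ 2 := by
      have := Real.sqrt_nonneg (b e e)
      nlinarith
    rw [Real.sq_sqrt (hnb e)] at h2
    rw [mul_pow, Real.sq_sqrt (hna e)] at h2
    exact h2
  -- combine
  have hX : (0:ℝ) < lamt ⟨k, hk⟩ * δ ^ 2 := mul_pos (hlamt_pos _) (pow_pos hδ 2)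
  have haqq_le : a q q ≤ (η ^ 2 / lamt ⟨k, hk⟩ / δ ^ 2) * a e e := by
    rw [div_div]
    rw [div_mul_eq_mul_div, le_div_iff₀ hX]
    calc a q q * (lamt ⟨k, hk⟩ * δ ^ 2) ≤ S := hsum
      _ ≤ b e e := hbessel
      _ ≤ η ^ 2 * a e e := hbea
  -- Pythagoras
  have hdecomp : ubar - F ubar = e + q := by
    simp only [he, hqdef]; abel
  have hpyth : a (ubar - F ubar) (ubar - F ubar) = a e e + a q q := by
    rw [hdecomp]
    simp only [map_add, LinearMap.add_apply]
    have h1 : a e q = 0 := heorth q hqW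
    have h2 : a q e = 0 := by rw [hsa]; exact h1
    rw [h1, h2]; ring
  have hfinal : a (ubar - F ubar) (ubar - F ubar)
      ≤ (1 + (η ^ 2 / lamt ⟨k, hk⟩) / δ ^ 2) * a e e := by
    rw [hpyth]
    calc a e e + a q q ≤ a e e + η ^ 2 / lamt ⟨k, hk⟩ / δ ^ 2 * a e e := by linarith
      _ = (1 + (η ^ 2 / lamt ⟨k, hk⟩) / δ ^ 2) * a e e := by ring
  have h1X : (0:ℝ) ≤ 1 + (η ^ 2 / lamt ⟨k, hk⟩) / δ ^ 2 := by
    have : (0:ℝ) ≤ (η ^ 2 / lamt ⟨k, hk⟩) / δ ^ 2 :=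
      div_nonneg (div_nonneg (sq_nonneg η) (hlamt_pos _).le) (sq_nonneg δ)
    linarith
  calc Real.sqrt (a (ubar - F ubar) (ubar - F ubar))
      ≤ Real.sqrt ((1 + (η ^ 2 / lamt ⟨k, hk⟩) / δ ^ 2) * a e e) :=
        Real.sqrt_le_sqrt hfinal
    _ = Real.sqrt (1 + (η ^ 2 / lamt ⟨k, hk⟩) / δ ^ 2)
        * Real.sqrt (a e e) := Real.sqrt_mul h1X _
end

section
/- Under the hypotheses of the previous statement (abstract Lemma 3.1), the b-norm error satisfies ‖ū − F ū‖_b ≤ (1 + μ̃_{k+1}/δ) · η · ‖ū − F ū‖_a, where μ̃_{k+1} = 1/λ̃_{k+1}. -/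
lemma bilin_cs {V : Type*} [AddCommGroup V] [Module ℝ V]
    (B : V →ₗ[ℝ] V →ₗ[ℝ] ℝ) (hs : ∀ x y, B x y = B y x)
    (hnn : ∀ x, 0 ≤ B x x) (x y : V) : B x y ^ 2 ≤ B x x * B y y := by
  have h : ∀ t : ℝ, 0 ≤ B y y * (t * t) + (2 * B x y) * t + B x x := by
    intro t
    have h0 := hnn (x + t • y)
    simp only [map_add, map_smul, LinearMap.add_apply, LinearMap.smul_apply,
      smul_eq_mul] at h0
    rw [hs y x] at h0
    have heq : B y y * (t * t) + (2 * B x y) * t + B x x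
        = B x x + t * B x y + (B x y + t * B y y) * t := by ring
    rw [heq]; linarith
  have hd := discrim_le_zero h
  rw [discrim] at hd
  nlinarith

lemma bilin_tri {V : Type*} [AddCommGroup V] [Module ℝ V]
    (B : V →ₗ[ℝ] V →ₗ[ℝ] ℝ) (hs : ∀ x y, B x y = B y x)
    (hnn : ∀ x, 0 ≤ B x x) (x y : V) :
    Real.sqrt (B (x + y) (x + y)) ≤ Real.sqrt (B x x) + Real.sqrt (B y y) := by
  have hcs : B x y ≤ Real.sqrt (B x x) * Real.sqrt (B y y) := by
    have h1 : B x y ≤ |B x y| := le_abs_self _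
    have h2 : |B x y| = Real.sqrt ((B x y) ^ 2) := by rw [Real.sqrt_sq_eq_abs]
    have h3 : Real.sqrt ((B x y) ^ 2) ≤ Real.sqrt (B x x * B y y) :=
      Real.sqrt_le_sqrt (bilin_cs B hs hnn x y)
    rw [Real.sqrt_mul (hnn x)] at h3
    linarith
  have hexp : B (x + y) (x + y) ≤ (Real.sqrt (B x x) + Real.sqrt (B y y)) ^ 2 := by
    have e1 : B (x + y) (x + y) = B x x + 2 * B x y + B y y := by
      simp only [map_add, LinearMap.add_apply]
      nlinarith [hs y x]
    have e2 : (Real.sqrt (B x x) + Real.sqrt (B y y)) ^ 2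
        = B x x + 2 * (Real.sqrt (B x x) * Real.sqrt (B y y)) + B y y := by
      rw [add_sq, Real.sq_sqrt (hnn x), Real.sq_sqrt (hnn y)]; ring
    linarith
  calc Real.sqrt (B (x + y) (x + y))
      ≤ Real.sqrt ((Real.sqrt (B x x) + Real.sqrt (B y y)) ^ 2) := Real.sqrt_le_sqrt hexp
    _ = _ := Real.sqrt_sq (by positivity)

set_option maxHeartbeats 1600000 in
theorem stmt_9 {V : Type*} [AddCommGroup V] [Module ℝ V] [FiniteDimensional ℝ V]
    (a b : V →ₗ[ℝ] V →ₗ[ℝ] ℝ)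
    (hsa : ∀ x y, a x y = a y x) (hsb : ∀ x y, b x y = b y x)
    (hpa : ∀ x, x ≠ 0 → 0 < a x x) (hpb : ∀ x, x ≠ 0 → 0 < b x x)
    (W : Submodule ℝ V)
    (P : V →ₗ[ℝ] V) (hPmem : ∀ w, P w ∈ W)
    (hPorth : ∀ w, ∀ y ∈ W, a (w - P w) y = 0)
    (η : ℝ) (hη : 0 < η)
    (happrox : ∀ w : V, Real.sqrt (b (w - P w) (w - P w))
        ≤ η * Real.sqrt (a (w - P w) (w - P w)))
    (M : ℕ) (lamt : Fin M → ℝ) (ut : Fin M → V)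
    (hutW : ∀ j, ut j ∈ W)
    (hlamt_pos : ∀ j, 0 < lamt j)
    (hlamt_mono : Monotone lamt)
    (horth : ∀ i j, a (ut i) (ut j) = if i = j then 1 else 0)
    (heigW : ∀ j, ∀ v ∈ W, a (ut j) v = lamt j * b (ut j) v)
    (hspan : Submodule.span ℝ (Set.range ut) = W)
    (k : ℕ) (hk : k < M)
    (F : V →ₗ[ℝ] V)
    (hFmem : ∀ w, F w ∈ Submodule.span ℝ (ut '' {j | (j : ℕ) < k}))
    (hForth : ∀ w, ∀ y ∈ Submodule.span ℝ (ut '' {j | (j : ℕ) < k}), a (w - F w) y = 0)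
    (ubar : V) (lambar : ℝ) (hlambar : 0 < lambar)
    (heig : ∀ v, a ubar v = lambar * b ubar v)
    (δ : ℝ) (hδ : 0 < δ)
    (hgap : ∀ j : Fin M, k ≤ (j : ℕ) → δ ≤ |1 / lamt j - 1 / lambar|) :
    Real.sqrt (b (ubar - F ubar) (ubar - F ubar))
      ≤ (1 + (1 / lamt ⟨k, hk⟩) / δ) * η
        * Real.sqrt (a (ubar - F ubar) (ubar - F ubar)) := by
  -- nonnegativity of the forms
  have hann : ∀ x, 0 ≤ a x x := by
    intro x
    by_cases hx : x = 0
    · simp [hx]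
    · exact le_of_lt (hpa x hx)
  have hbnn : ∀ x, 0 ≤ b x x := by
    intro x
    by_cases hx : x = 0
    · simp [hx]
    · exact le_of_lt (hpb x hx)
  set μ : ℝ := 1 / lamt ⟨k, hk⟩ with hμ
  have hμpos : 0 < μ := by rw [hμ]; exact div_pos one_pos (hlamt_pos _)
  set x : V := ubar - P ubar with hxdef
  set r : V := P ubar - F ubar with hrdef
  have hxr : ubar - F ubar = x + r := by rw [hxdef, hrdef]; abel
  -- the span is inside W
  have hWle : Submodule.span ℝ (ut '' {j : Fin M | (j : ℕ) < k}) ≤ W := by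
    rw [Submodule.span_le]
    rintro v ⟨j, _, rfl⟩
    exact hutW j
  have hFW : F ubar ∈ W := hWle (hFmem ubar)
  have hrW : r ∈ W := sub_mem (hPmem ubar) hFW
  -- coefficients
  set c : Fin M → ℝ := fun j => a ubar (ut j) with hcdef
  have hPc : ∀ j, a (P ubar) (ut j) = c j := by
    intro j
    have h0 := hPorth ubar (ut j) (hutW j)
    simp only [map_sub, LinearMap.sub_apply] at h0
    simp only [hcdef]
    linarith
  -- orthogonality of one ut against the span of the first k
  have hut_span_orth : ∀ j : Fin M, k ≤ (j : ℕ) →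
      ∀ y ∈ Submodule.span ℝ (ut '' {i : Fin M | (i : ℕ) < k}), a y (ut j) = 0 := by
    intro j hj y hy
    have : Submodule.span ℝ (ut '' {i : Fin M | (i : ℕ) < k}) ≤
        LinearMap.ker (a.flip (ut j)) := by
      rw [Submodule.span_le]
      rintro v ⟨i, hi, rfl⟩
      simp only [SetLike.mem_coe, LinearMap.mem_ker, LinearMap.flip_apply]
      rw [horth]
      have : i ≠ j := by
        intro h
        rw [h] at hi
        exact absurd hi (by simpa using hj)
      simp [this]
    have := this hy
    simpa using this
  -- coefficients of r
  have hγ_lt : ∀ j : Fin M, (j : ℕ) < k → a r (ut j) = 0 := by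
    intro j hj
    have h1 : a (ubar - F ubar) (ut j) = 0 :=
      hForth ubar (ut j) (Submodule.subset_span ⟨j, hj, rfl⟩)
    have h2 := hPorth ubar (ut j) (hutW j)
    simp only [hrdef, map_sub, LinearMap.sub_apply] at h1 h2 ⊢
    linarith
  have hγ_ge : ∀ j : Fin M, k ≤ (j : ℕ) → a r (ut j) = c j := by
    intro j hj
    have h1 : a (F ubar) (ut j) = 0 := hut_span_orth j hj (F ubar) (hFmem ubar)
    have h2 := hPc j
    simp only [hrdef, map_sub, LinearMap.sub_apply]
    rw [h1, h2]; ring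
  -- b-products of eigenvectors
  have hbut : ∀ i j, b (ut i) (ut j) = (if i = j then 1 else 0) / lamt i := by
    intro i j
    have h1 := heigW i (ut j) (hutW j)
    rw [horth] at h1
    rw [eq_div_iff (hlamt_pos i).ne']
    linarith
  -- expansion of elements of W in the eigenbasis
  have hexp : ∀ w ∈ W, w = ∑ j, a w (ut j) • ut j := by
    intro w hw
    set s : V := w - ∑ j, a w (ut j) • ut j with hsdef
    have hsW : s ∈ W := by
      apply sub_mem hw
      exact Submodule.sum_mem W fun j _ => Submodule.smul_mem W _ (hutW j)
    have hso : ∀ i, a s (ut i) = 0 := by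
      intro i
      simp only [hsdef, map_sub, map_sum, map_smul, LinearMap.sub_apply,
        LinearMap.sum_apply, LinearMap.smul_apply, smul_eq_mul, horth,
        mul_ite, mul_one, mul_zero]
      rw [Finset.sum_ite_eq' Finset.univ i (fun j => a w (ut j))]
      simp
    have hsv : ∀ v ∈ W, a s v = 0 := by
      intro v hv
      rw [← hspan] at hv
      have hle : Submodule.span ℝ (Set.range ut) ≤ LinearMap.ker (a s) := by
        rw [Submodule.span_le]
        rintro u ⟨i, rfl⟩
        simpa using hso i
      simpa using hle hv
    have hss : a s s = 0 := hsv s hsW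
    have : s = 0 := by
      by_contra h
      exact absurd hss (ne_of_gt (hpa s h))
    rw [hsdef] at this
    exact (sub_eq_zero.mp this)
  -- b-coefficients of x
  set d : Fin M → ℝ := fun j => b x (ut j) with hddef
  have hd : ∀ j, d j = c j * (1 / lambar - 1 / lamt j) := by
    intro j
    have h1 : b ubar (ut j) = c j / lambar := by
      have := heig (ut j)
      rw [eq_div_iff hlambar.ne']
      simp only [hcdef]; linarith
    have h2 : b (P ubar) (ut j) = c j / lamt j := by
      have h3 := heigW j (P ubar) (hPmem ubar)
      rw [hsa (ut j) (P ubar), hPc j] at h3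
      rw [hsb, eq_div_iff (hlamt_pos j).ne']
      linarith
    simp only [hddef, hxdef, map_sub, LinearMap.sub_apply, h1, h2]
    field_simp
  -- Bessel inequality
  have hbessel : ∑ j, lamt j * d j ^ 2 ≤ b x x := by
    set s : V := ∑ j, (lamt j * d j) • ut j with hsdef
    have hxs : b x s = ∑ j, lamt j * d j ^ 2 := by
      simp only [hsdef, map_sum, map_smul, smul_eq_mul]
      apply Finset.sum_congr rfl
      intro j _
      simp only [hddef]
      ring
    have hsx : b s x = ∑ j, lamt j * d j ^ 2 := by rw [hsb]; exact hxs
    have hss : b s s = ∑ j, lamt j * d j ^ 2 := by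
      have inner : ∀ jj : Fin M,
          (∑ i, lamt i * d i * ((if i = jj then 1 else 0) / lamt i)) = d jj := by
        intro jj
        rw [Finset.sum_eq_single jj]
        · have := (hlamt_pos jj).ne'
          field_simp
          simp
        · intro i _ hij
          simp [hij]
        · simp
      simp only [hsdef, map_sum, map_smul, LinearMap.sum_apply, LinearMap.smul_apply,
        smul_eq_mul, hbut]
      simp only [inner]
      apply Finset.sum_congr rfl
      intro j _
      ring
    have h0 := hbnn (x - s)
    simp only [map_sub, LinearMap.sub_apply] at h0
    rw [hxs, hsx, hss] at h0
    linarith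
  -- expansion of b r r
  have hbrr : b r r = ∑ j, a r (ut j) * (a r (ut j) / lamt j) := by
    have hbutr : ∀ j, b (ut j) r = a r (ut j) / lamt j := by
      intro j
      have h1 := heigW j r hrW
      rw [hsa (ut j) r] at h1
      rw [eq_div_iff (hlamt_pos j).ne']
      linarith
    have e0 : b r r = b (∑ j, a r (ut j) • ut j) r :=
      congrArg (fun z => b z r) (hexp r hrW)
    rw [e0]
    simp only [map_sum, map_smul, LinearMap.sum_apply, LinearMap.smul_apply, smul_eq_mul]
    apply Finset.sum_congr rfl
    intro j _
    rw [hbutr j]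
  -- termwise estimate
  have hterm : ∀ j : Fin M,
      a r (ut j) * (a r (ut j) / lamt j) ≤ (μ / δ) ^ 2 * (lamt j * d j ^ 2) := by
    intro j
    by_cases hj : (j : ℕ) < k
    · rw [hγ_lt j hj]
      have h0 : 0 ≤ (μ / δ) ^ 2 * (lamt j * d j ^ 2) :=
        mul_nonneg (sq_nonneg _) (mul_nonneg (hlamt_pos j).le (sq_nonneg _))
      simpa using h0
    · push_neg at hj
      rw [hγ_ge j hj, hd j]
      have hgapj := hgap j hj
      have hmono : lamt ⟨k, hk⟩ ≤ lamt j := hlamt_mono (by simpa [Fin.le_def] using hj)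
      have hKpos := hlamt_pos ⟨k, hk⟩
      have hjpos := hlamt_pos j
      have habs : δ ^ 2 ≤ (1 / lambar - 1 / lamt j) ^ 2 := by
        have h1 : δ ^ 2 ≤ |1 / lamt j - 1 / lambar| ^ 2 := by
          apply pow_le_pow_left₀ (le_of_lt hδ) hgapj
        rw [sq_abs] at h1
        nlinarith
      -- goal: c j * (c j / lamt j) ≤ (μ/δ)^2 * (lamt j * (c j * (1/lambar - 1/lamt j))^2)
      have key : c j * (c j / lamt j) ≤ μ ^ 2 * (lamt j * c j ^ 2) := by
        rw [hμ]
        have hK2 : lamt ⟨k, hk⟩ ^ 2 ≤ lamt j ^ 2 := by nlinarith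
        rw [show c j * (c j / lamt j) = c j ^ 2 / lamt j from by ring,
          show (1 / lamt ⟨k, hk⟩) ^ 2 * (lamt j * c j ^ 2)
            = (lamt j * c j ^ 2) / lamt ⟨k, hk⟩ ^ 2 from by ring,
          div_le_div_iff₀ hjpos (pow_pos hKpos 2)]
        nlinarith [mul_nonneg (sq_nonneg (c j)) (sub_nonneg.mpr hK2)]
      have key2 : μ ^ 2 * (lamt j * c j ^ 2) ≤
          (μ / δ) ^ 2 * (lamt j * (c j * (1 / lambar - 1 / lamt j)) ^ 2) := by
        have e1 : (μ / δ) ^ 2 * (lamt j * (c j * (1 / lambar - 1 / lamt j)) ^ 2)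
            = (μ ^ 2 / δ ^ 2) * (lamt j * c j ^ 2) * (1 / lambar - 1 / lamt j) ^ 2 := by
          ring
        have e2 : μ ^ 2 * (lamt j * c j ^ 2)
            = (μ ^ 2 / δ ^ 2) * (lamt j * c j ^ 2) * δ ^ 2 := by
          have e3 : μ ^ 2 / δ ^ 2 * (lamt j * c j ^ 2) * δ ^ 2
              = μ ^ 2 * (lamt j * c j ^ 2) * (δ ^ 2 / δ ^ 2) := by ring
          rw [e3, div_self (pow_pos hδ 2).ne', mul_one]
        rw [e1, e2]
        apply mul_le_mul_of_nonneg_left habs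
        have hln : 0 ≤ lamt j * c j ^ 2 := mul_nonneg (hlamt_pos j).le (sq_nonneg _)
        have hdd : 0 ≤ μ ^ 2 / δ ^ 2 := div_nonneg (sq_nonneg _) (sq_nonneg _)
        exact mul_nonneg hdd hln
      linarith
  -- combine: b r r ≤ (μ/δ)^2 * b x x
  have hbrr_le : b r r ≤ (μ / δ) ^ 2 * b x x := by
    calc b r r = ∑ j, a r (ut j) * (a r (ut j) / lamt j) := hbrr
      _ ≤ ∑ j, (μ / δ) ^ 2 * (lamt j * d j ^ 2) :=
          Finset.sum_le_sum fun j _ => hterm j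
      _ = (μ / δ) ^ 2 * ∑ j, lamt j * d j ^ 2 := by rw [Finset.mul_sum]
      _ ≤ (μ / δ) ^ 2 * b x x := mul_le_mul_of_nonneg_left hbessel (sq_nonneg _)
  have hsqrt_r : Real.sqrt (b r r) ≤ (μ / δ) * Real.sqrt (b x x) := by
    calc Real.sqrt (b r r) ≤ Real.sqrt ((μ / δ) ^ 2 * b x x) := Real.sqrt_le_sqrt hbrr_le
      _ = (μ / δ) * Real.sqrt (b x x) := by
          rw [Real.sqrt_mul (sq_nonneg _), Real.sqrt_sq (div_pos hμpos hδ).le]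
  -- triangle inequality
  have htri : Real.sqrt (b (ubar - F ubar) (ubar - F ubar))
      ≤ Real.sqrt (b x x) + Real.sqrt (b r r) := by
    rw [hxr]
    exact bilin_tri b hsb hbnn x r
  -- approximation estimate
  have happ : Real.sqrt (b x x) ≤ η * Real.sqrt (a x x) := happrox ubar
  -- a x x ≤ a e e
  have haxe : a x x ≤ a (ubar - F ubar) (ubar - F ubar) := by
    have haxr : a x r = 0 := hPorth ubar r hrW
    have harx : a r x = 0 := by rw [hsa]; exact haxr
    have harr : 0 ≤ a r r := hann r
    rw [hxr]
    simp only [map_add, LinearMap.add_apply]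
    linarith
  have hsqrt_a : Real.sqrt (a x x) ≤ Real.sqrt (a (ubar - F ubar) (ubar - F ubar)) :=
    Real.sqrt_le_sqrt haxe
  -- final chain
  have hfac : (0:ℝ) ≤ 1 + μ / δ := by
    have := (div_pos hμpos hδ).le
    linarith
  have h1 : Real.sqrt (b (ubar - F ubar) (ubar - F ubar))
      ≤ (1 + μ / δ) * Real.sqrt (b x x) := by
    have hexp1 : (1 + μ / δ) * Real.sqrt (b x x)
        = Real.sqrt (b x x) + (μ / δ) * Real.sqrt (b x x) := by ring
    rw [hexp1]
    linarith [htri, hsqrt_r]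
  have h2 : (1 + μ / δ) * Real.sqrt (b x x) ≤ (1 + μ / δ) * (η * Real.sqrt (a x x)) :=
    mul_le_mul_of_nonneg_left happ hfac
  have h3 : (1 + μ / δ) * (η * Real.sqrt (a x x))
      ≤ (1 + μ / δ) * η * Real.sqrt (a (ubar - F ubar) (ubar - F ubar)) := by
    rw [mul_assoc]
    exact mul_le_mul_of_nonneg_left
      (mul_le_mul_of_nonneg_left hsqrt_a (le_of_lt hη)) hfac
  calc Real.sqrt (b (ubar - F ubar) (ubar - F ubar))
      ≤ (1 + μ / δ) * Real.sqrt (b x x) := h1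
    _ ≤ (1 + μ / δ) * (η * Real.sqrt (a x x)) := h2
    _ ≤ (1 + μ / δ) * η * Real.sqrt (a (ubar - F ubar) (ubar - F ubar)) := h3
end

section
/- In the abstract augmented subspace setting: let ū ∈ V be a generalized eigenvector with eigenvalue λ̄ (a(ū,v) = λ̄ b(ū,v) for all v ∈ V, a(ū,ū) = 1). Suppose (λ^ℓ, u^ℓ) ∈ ℝ × V is a current approximation, and û ∈ V solves a(û, v) = λ^ℓ b(u^ℓ, v) for all v ∈ V. Let π be the b-orthogonal projection onto span{u^ℓ} and let P be the a-orthogonal projection onto any subspace W' containing û. Then a(ū − P ū, ū − P ū) = λ̄ b(ū − π ū, ū − P ū). -/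
theorem stmt_12 {V : Type*} [AddCommGroup V] [Module ℝ V] [FiniteDimensional ℝ V]
    (a b : V →ₗ[ℝ] V →ₗ[ℝ] ℝ)
    (hsa : ∀ x y, a x y = a y x) (hsb : ∀ x y, b x y = b y x)
    (hpa : ∀ x, x ≠ 0 → 0 < a x x) (hpb : ∀ x, x ≠ 0 → 0 < b x x)
    (ubar : V) (lambar : ℝ) (hlambar : 0 < lambar)
    (heig : ∀ v, a ubar v = lambar * b ubar v)
    (hnorm : a ubar ubar = 1)
    (laml : ℝ) (hlaml : laml ≠ 0) (ul : V)
    (uhat : V) (huhat : ∀ v, a uhat v = laml * b ul v)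
    (q : ℝ) (hq : b (ubar - q • ul) ul = 0)
    (W' : Submodule ℝ V) (huhatW : uhat ∈ W')
    (P : V →ₗ[ℝ] V) (hPmem : ∀ w, P w ∈ W')
    (hPorth : ∀ w, ∀ y ∈ W', a (w - P w) y = 0) :
    a (ubar - P ubar) (ubar - P ubar)
      = lambar * b (ubar - q • ul) (ubar - P ubar) := by
  set r := ubar - P ubar with hr
  have hPu : a r (P ubar) = 0 := hPorth ubar _ (hPmem ubar)
  have huh : a r uhat = 0 := hPorth ubar _ huhatW
  have hbul : b ul r = 0 := by
    have h1 : a uhat r = laml * b ul r := huhat r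
    rw [hsa] at h1
    have := h1.symm.trans huh
    -- laml * b ul r = 0
    rcases mul_eq_zero.mp this with h | h
    · exact absurd h hlaml
    · exact h
  have h2 : a r r = lambar * b ubar r := by
    have : a r r = a r ubar - a r (P ubar) := by
      rw [hr]; simp [map_sub]
    rw [this, hPu, sub_zero, hsa, heig, hsb]
  rw [h2]
  have : b (ubar - q • ul) r = b ubar r - q * b ul r := by
    simp [map_sub, map_smul]
  rw [this, hbul, mul_zero, sub_zero]
end

section
/- Let H be a finite-dimensional real inner product space with inner products a and b, let (μ_j) with μ_j = 1/λ_j be the reciprocals of the generalized eigenvalues (a-orthonormal eigenvectors u_j), and fix an index i. For any g ∈ H and μ > 0 with δ := min_{j≠i} |μ_j − μ| > 0, the vector w = Σ_{j≠i} (1/(μ − μ_j)) b(g, u_j) u_j satisfies ‖w‖_a ≤ (√μ_1 / δ) ‖g‖_b, where μ_1 = max_j μ_j. -/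
theorem stmt_15 {V : Type*} [AddCommGroup V] [Module ℝ V] [FiniteDimensional ℝ V]
    (a b : V →ₗ[ℝ] V →ₗ[ℝ] ℝ)
    (hsa : ∀ x y, a x y = a y x) (hsb : ∀ x y, b x y = b y x)
    (hpa : ∀ x, x ≠ 0 → 0 < a x x) (hpb : ∀ x, x ≠ 0 → 0 < b x x)
    (N : ℕ) (μ : Fin N → ℝ) (u : Fin N → V) (i : Fin N)
    (hμpos : ∀ j, 0 < μ j)
    (horth : ∀ i' j, a (u i') (u j) = if i' = j then 1 else 0)
    (hborth : ∀ i' j, b (u i') (u j) = if i' = j then μ j else 0)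
    (μ1 : ℝ) (hμ1 : ∀ j, μ j ≤ μ1)
    (g : V) (μ0 δ : ℝ) (hμ0 : 0 < μ0) (hδ : 0 < δ)
    (hgap : ∀ j : Fin N, j ≠ i → δ ≤ |μ j - μ0|)
    (w : V)
    (hw : w = ∑ j ∈ Finset.univ.filter (fun j : Fin N => j ≠ i),
        ((1 / (μ0 - μ j)) * b g (u j)) • u j) :
    Real.sqrt (a w w) ≤ (Real.sqrt μ1 / δ) * Real.sqrt (b g g) := by
  classical
  set S := Finset.univ.filter (fun j : Fin N => j ≠ i) with hS
  set c : Fin N → ℝ := fun j => (1 / (μ0 - μ j)) * b g (u j) with hc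
  have hbnn : ∀ x, 0 ≤ b x x := by
    intro x
    by_cases hx : x = 0
    · simp [hx]
    · exact (hpb x hx).le
  -- bilinearity helpers
  have hbilR : ∀ (B : V →ₗ[ℝ] V →ₗ[ℝ] ℝ) (x : V) (f : Fin N → ℝ) (T : Finset (Fin N)),
      B x (∑ k ∈ T, f k • u k) = ∑ k ∈ T, f k * B x (u k) := by
    intro B x f T
    rw [map_sum]
    exact Finset.sum_congr rfl fun k _ => by rw [map_smul, smul_eq_mul]
  have hbilL : ∀ (B : V →ₗ[ℝ] V →ₗ[ℝ] ℝ) (f : Fin N → ℝ) (T : Finset (Fin N)) (y : V),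
      B (∑ j ∈ T, f j • u j) y = ∑ j ∈ T, f j * B (u j) y := by
    intro B f T y
    rw [map_sum, LinearMap.sum_apply]
    exact Finset.sum_congr rfl fun j _ => by rw [map_smul, LinearMap.smul_apply, smul_eq_mul]
  have hA : a w w = ∑ j ∈ S, (c j)^2 := by
    rw [hw, hbilL]
    refine Finset.sum_congr rfl fun j hj => ?_
    rw [hbilR, Finset.sum_eq_single j]
    · rw [horth, if_pos rfl]; ring
    · intro k hk hkj
      rw [horth, if_neg (Ne.symm hkj), mul_zero]
    · intro h; exact absurd hj h
  -- Bessel inequality in b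
  set d : Fin N → ℝ := fun j => b g (u j) / μ j with hd
  set s : V := ∑ j ∈ S, d j • u j with hs
  have hBessel : ∑ j ∈ S, (b g (u j))^2 / μ j ≤ b g g := by
    have hv := hbnn (g - s)
    have e0 : b (g - s) (g - s) = b g g - b g s - b s g + b s s := by
      simp only [map_sub, LinearMap.sub_apply]; ring
    have e1 : b g s = ∑ j ∈ S, (b g (u j))^2 / μ j := by
      rw [hs, hbilR]
      refine Finset.sum_congr rfl fun j hj => ?_
      have := (hμpos j).ne'
      rw [hd]; field_simp
    have e2 : b s g = ∑ j ∈ S, (b g (u j))^2 / μ j := by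
      rw [hs, hbilL]
      refine Finset.sum_congr rfl fun j hj => ?_
      have := (hμpos j).ne'
      rw [hsb, hd]; field_simp
    have e3 : b s s = ∑ j ∈ S, (b g (u j))^2 / μ j := by
      rw [hs, hbilL]
      refine Finset.sum_congr rfl fun j hj => ?_
      rw [hbilR, Finset.sum_eq_single j]
      · rw [hborth, if_pos rfl, hd]
        have := (hμpos j).ne'
        field_simp
      · intro k hk hkj
        rw [hborth, if_neg (Ne.symm hkj), mul_zero]
      · intro h; exact absurd hj h
    rw [e0, e1, e2, e3] at hv
    linarith
  by_cases hμ1nn : 0 ≤ μ1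
  · -- termwise bound
    have hterm : ∀ j ∈ S, (c j)^2 ≤ (μ1 / δ^2) * ((b g (u j))^2 / μ j) := by
      intro j hj
      have hji : j ≠ i := by simpa [hS] using hj
      have hgapj := hgap j hji
      have hδ2 : δ^2 ≤ (μ0 - μ j)^2 := by
        calc δ^2 ≤ (μ j - μ0)^2 := by
              rw [← sq_abs (μ j - μ0)]; exact pow_le_pow_left₀ hδ.le hgapj 2
          _ = (μ0 - μ j)^2 := by ring
      have hP : (0:ℝ) < (μ0 - μ j)^2 := by nlinarith
      have hμj := hμpos j
      have hc2 : (c j)^2 = (b g (u j))^2 / (μ0 - μ j)^2 := by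
        rw [hc]
        have hne : μ0 - μ j ≠ 0 := fun h => by rw [h] at hP; simp at hP
        field_simp
      have hrhs : (μ1 / δ^2) * ((b g (u j))^2 / μ j)
          = (μ1 * (b g (u j))^2) / (δ^2 * μ j) := by ring
      rw [hc2, hrhs, div_le_div_iff₀ hP (by positivity)]
      have hBnn : 0 ≤ (b g (u j))^2 := sq_nonneg _
      calc (b g (u j))^2 * (δ^2 * μ j)
          ≤ (b g (u j))^2 * ((μ0 - μ j)^2 * μ j) :=
            mul_le_mul_of_nonneg_left (mul_le_mul_of_nonneg_right hδ2 hμj.le) hBnn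
        _ ≤ μ1 * (b g (u j))^2 * (μ0 - μ j)^2 := by
            nlinarith [mul_nonneg (mul_nonneg (sub_nonneg.2 (hμ1 j)) hBnn) hP.le]
    have hsum : a w w ≤ (μ1 / δ^2) * b g g := by
      rw [hA]
      calc ∑ j ∈ S, (c j)^2 ≤ ∑ j ∈ S, (μ1 / δ^2) * ((b g (u j))^2 / μ j) :=
            Finset.sum_le_sum hterm
        _ = (μ1 / δ^2) * ∑ j ∈ S, (b g (u j))^2 / μ j := by rw [Finset.mul_sum]
        _ ≤ (μ1 / δ^2) * b g g :=
            mul_le_mul_of_nonneg_left hBessel (by positivity)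
    calc Real.sqrt (a w w) ≤ Real.sqrt ((μ1 / δ^2) * b g g) := Real.sqrt_le_sqrt hsum
      _ = Real.sqrt μ1 / δ * Real.sqrt (b g g) := by
        rw [Real.sqrt_mul (by positivity), Real.sqrt_div hμ1nn, Real.sqrt_sq hδ.le]
  · have hN : IsEmpty (Fin N) := by
      by_contra h
      simp [not_isEmpty_iff] at h
      obtain ⟨j⟩ := h
      exact hμ1nn (le_trans (hμpos j).le (hμ1 j))
    have hw0 : w = 0 := by
      rw [hw]
      exact Finset.sum_eq_zero fun j hj => (hN.false j).elim
    rw [hw0]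
    simp only [map_zero, LinearMap.zero_apply, Real.sqrt_zero]
    positivity
end

section
/- In the same setting, the vector w = Σ_{j≠i} (1/(μ − μ_j)) b(g, u_j) u_j satisfies the b-norm bound ‖w‖_b ≤ (μ_1 / δ) ‖g‖_b, where μ_1 = max_j μ_j and δ = min_{j≠i} |μ_j − μ|. -/
theorem stmt_16 {V : Type*} [AddCommGroup V] [Module ℝ V] [FiniteDimensional ℝ V]
    (a b : V →ₗ[ℝ] V →ₗ[ℝ] ℝ)
    (hsa : ∀ x y, a x y = a y x) (hsb : ∀ x y, b x y = b y x)
    (hpa : ∀ x, x ≠ 0 → 0 < a x x) (hpb : ∀ x, x ≠ 0 → 0 < b x x)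
    (N : ℕ) (μ : Fin N → ℝ) (u : Fin N → V) (i : Fin N)
    (hμpos : ∀ j, 0 < μ j)
    (horth : ∀ i' j, a (u i') (u j) = if i' = j then 1 else 0)
    (hborth : ∀ i' j, b (u i') (u j) = if i' = j then μ j else 0)
    (μ1 : ℝ) (hμ1 : ∀ j, μ j ≤ μ1)
    (g : V) (μ0 δ : ℝ) (hμ0 : 0 < μ0) (hδ : 0 < δ)
    (hgap : ∀ j : Fin N, j ≠ i → δ ≤ |μ j - μ0|)
    (w : V)
    (hw : w = ∑ j ∈ Finset.univ.filter (fun j : Fin N => j ≠ i),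
        ((1 / (μ0 - μ j)) * b g (u j)) • u j) :
    Real.sqrt (b w w) ≤ (μ1 / δ) * Real.sqrt (b g g) := by
  classical
  have hbnn : ∀ x : V, 0 ≤ b x x := by
    intro x
    by_cases hx : x = 0
    · simp [hx]
    · exact (hpb x hx).le
  have key : ∀ (S : Finset (Fin N)) (c d : Fin N → ℝ),
      b (∑ j ∈ S, c j • u j) (∑ k ∈ S, d k • u k) = ∑ j ∈ S, c j * d j * μ j := by
    intro S c d
    rw [map_sum]
    simp only [LinearMap.coe_sum, Finset.sum_apply, LinearMap.map_smul, map_sum,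
      LinearMap.smul_apply, smul_eq_mul, hborth, mul_ite, mul_zero, Finset.mul_sum]
    refine Finset.sum_congr rfl fun j hj => ?_
    rw [Finset.sum_ite_eq' S j]
    simp [hj]; ring
  have cross : ∀ (S : Finset (Fin N)) (d : Fin N → ℝ),
      b g (∑ j ∈ S, d j • u j) = ∑ j ∈ S, d j * b g (u j) := by
    intro S d
    rw [map_sum]
    simp [smul_eq_mul]
  have hμ1pos : 0 < μ1 := lt_of_lt_of_le (hμpos i) (hμ1 i)
  set S := Finset.univ.filter (fun j : Fin N => j ≠ i) with hS
  set c : Fin N → ℝ := fun j => (1 / (μ0 - μ j)) * b g (u j) with hc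
  have hbw : b w w = ∑ j ∈ S, c j * c j * μ j := by
    rw [hw]; exact key S c c
  -- Bessel
  set d : Fin N → ℝ := fun j => b g (u j) / μ j with hd
  set s : V := ∑ j : Fin N, d j • u j with hs
  have hbessel : ∑ j : Fin N, (b g (u j))^2 / μ j ≤ b g g := by
    have h1 : b (g - s) (g - s) =
        b g g - ∑ j : Fin N, (b g (u j))^2 / μ j := by
      have e1 : b g s = ∑ j : Fin N, (b g (u j))^2 / μ j := by
        rw [hs, cross]
        refine Finset.sum_congr rfl fun j _ => ?_
        field_simp [hd]
        ring
      have e2 : b s g = ∑ j : Fin N, (b g (u j))^2 / μ j := by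
        rw [hsb]; exact e1
      have e3 : b s s = ∑ j : Fin N, (b g (u j))^2 / μ j := by
        rw [hs, key]
        refine Finset.sum_congr rfl fun j _ => ?_
        have := (hμpos j).ne'
        simp only [hd]
        field_simp [hd]
      simp only [map_sub, LinearMap.sub_apply, e1, e2, e3]
      ring
    have := hbnn (g - s)
    rw [h1] at this
    linarith
  -- bound the sum
  have hterm : ∀ j ∈ S, c j * c j * μ j ≤ (μ1/δ)^2 * ((b g (u j))^2 / μ j) := by
    intro j hj
    have hji : j ≠ i := by
      simpa [hS] using hj
    have hgapj := hgap j hji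
    have hμj := hμpos j
    have hne : μ0 - μ j ≠ 0 := by
      intro h
      have : |μ j - μ0| = 0 := by rw [abs_eq_zero]; linarith
      rw [this] at hgapj; linarith
    have h1 : (1 / (μ0 - μ j))^2 ≤ 1 / δ^2 := by
      rw [div_pow, one_pow, div_le_div_iff₀ (by positivity) (by positivity)]
      have : δ^2 ≤ (μ j - μ0)^2 := by
        calc δ^2 ≤ |μ j - μ0|^2 := by
              apply pow_le_pow_left₀ hδ.le hgapj
          _ = (μ j - μ0)^2 := sq_abs _
      nlinarith [sq_nonneg (μ0 - μ j), sq_nonneg (μ j - μ0)]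
    have h2 : μ j * μ j ≤ μ1^2 := by nlinarith [hμ1 j, hμj]
    have heq : c j * c j * μ j = (1/(μ0 - μ j))^2 * (b g (u j))^2 * μ j := by
      simp only [hc]; ring
    rw [heq]
    have hb2 : 0 ≤ (b g (u j))^2 := sq_nonneg _
    rw [show (μ1/δ)^2 * ((b g (u j))^2 / μ j) = ((μ1/δ)^2 * (b g (u j))^2) / μ j by ring,
      le_div_iff₀ hμj]
    have h3 : (1/(μ0-μ j))^2 * (μ j * μ j) ≤ (1/δ^2) * μ1^2 :=
      mul_le_mul h1 h2 (by positivity) (by positivity)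
    have h4 := mul_le_mul_of_nonneg_right h3 hb2
    ring_nf at h4 ⊢
    linarith [h4]
  -- chain
  have hsum : b w w ≤ (μ1/δ)^2 * b g g := by
    rw [hbw]
    calc ∑ j ∈ S, c j * c j * μ j
        ≤ ∑ j ∈ S, (μ1/δ)^2 * ((b g (u j))^2 / μ j) := Finset.sum_le_sum hterm
      _ ≤ ∑ j : Fin N, (μ1/δ)^2 * ((b g (u j))^2 / μ j) := by
          apply Finset.sum_le_sum_of_subset_of_nonneg (Finset.filter_subset _ _)
          intro j _ _
          exact mul_nonneg (by positivity) (div_nonneg (sq_nonneg _) (hμpos j).le)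
      _ = (μ1/δ)^2 * ∑ j : Fin N, (b g (u j))^2 / μ j := by rw [Finset.mul_sum]
      _ ≤ (μ1/δ)^2 * b g g := by
          apply mul_le_mul_of_nonneg_left hbessel (by positivity)
  calc Real.sqrt (b w w) ≤ Real.sqrt ((μ1/δ)^2 * b g g) := Real.sqrt_le_sqrt hsum
    _ = (μ1/δ) * Real.sqrt (b g g) := by
        rw [Real.sqrt_mul (by positivity), Real.sqrt_sq (by positivity)]
end
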